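/- arXiv:1911.10181 — 7 statements merged into one kernel-verified Lean document; each statement's English description precedes it below -/
import Mathlib

section
/- In the augmented Braess network with marginal-cost tolls τ_{e1}(x)=x and τ_{e4}(x)=x on the flow-varying edges, with 1 unit of traffic having sensitivity s1=0 and 1 unit having sensitivity s2=1, the flow f1=1, f2=0, f3=0, f4=1 (all insensitive traffic on the zig-zag path, all sensitive traffic on the constant path) is a Nash flow, and its total latency equals 5, strictly greater than the untolled Nash total latency of 4. -/
/-- Augmented Braess network with marginal-cost tolls τ_{e1}(x)=x, τ_{e4}(x)=x.
Population 1 (sensitivity 0, mass 1) uses the zig-zag path p1; population 2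
(sensitivity 1, mass 1) uses the constant path p4.  The flow (1,0,0,1) is a
Nash flow for this two-population game, and its total latency is 5 > 4, the
total latency of the untolled Nash flow. -/
theorem stmt1
    (f : Fin 4 → ℝ) (hf : f = ![1, 0, 0, 1])
    (L : (Fin 4 → ℝ) → Fin 4 → ℝ)
    (hL : ∀ g, L g = ![ (g 0 + g 1) + (g 0 + g 2),
                        (g 0 + g 1) + 1,
                        1 + (g 0 + g 2),
                        3 ])
    -- tolled cost on path p for a user with sensitivity s
    (J : ℝ → (Fin 4 → ℝ) → Fin 4 → ℝ)
    (hJ : ∀ s g, J s g = ![ L g 0 + s * ((g 0 + g 1) + (g 0 + g 2)),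
                            L g 1 + s * (g 0 + g 1),
                            L g 2 + s * (g 0 + g 2),
                            L g 3 ]) :
    -- population 1 (s = 0) uses p1 and p1 is a best response for it
    (∀ q, J 0 f 0 ≤ J 0 f q) ∧
    -- population 2 (s = 1) uses p4 and p4 is a best response for it
    (∀ q, J 1 f 3 ≤ J 1 f q) ∧
    -- total latency is 5, strictly greater than the untolled value 4
    (∑ p, f p * L f p = 5) ∧ (4 < ∑ p, f p * L f p) := by
  subst hf
  refine ⟨?_, ?_, ?_, ?_⟩ <;>
  first
  | (intro q; fin_cases q <;> simp [hJ, hL, Fin.sum_univ_four] <;> norm_num)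
  | (simp [hL, Fin.sum_univ_four] <;> norm_num)
end

section
/- For the generalized Braess construction with parameter γ2 ∈ (0,1] and γ1 = γ2/8: edge latencies ℓ_{e1}(x)=ℓ_{e4}(x)=x, ℓ_{e2}=ℓ_{e3}=1+γ2/8, ℓ_{e5}=0, ℓ_{e6}=2+γ2, and effective path costs for sensitivity class i ∈ {1,2} given by J^i_p(f) = Σ_{e∈p}(ℓ_e(f_e) + γ_i f_e ℓ'_e(f_e)), the flow f^perv = (1,0,0,1) satisfies: population 1 (on path p1) weakly prefers p1 (its cost 2(1+γ1) is ≤ the costs 2+γ1+γ1, 2+γ1+γ1, and 2+γ2 of the other paths) and population 2 (on path p4) strictly prefers p4 (its cost 2+γ2 is < 2(1+γ2) and < 2+γ1+γ2). -/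
/-- `![J_{p1}, J_{p2}, J_{p3}, J_{p4}]` at `f^perv = (1,0,0,1)` for the class with parameter `γ`. -/
noncomputable def braessPathCost (γ₂ γ : ℝ) : Fin 4 → ℝ :=
  ![(1 + γ * 1) + (1 + γ * 1), (1 + γ * 1) + (1 + γ₂ / 8), (1 + γ₂ / 8) + (1 + γ * 1), 2 + γ₂]

theorem braessPathCost_zero_le {γ₂ γ : ℝ} (hγ : 0 ≤ γ) (hγγ₂ : γ ≤ γ₂ / 8) (q : Fin 4) :
    braessPathCost γ₂ γ 0 ≤ braessPathCost γ₂ γ q := by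
  fin_cases q <;> simp [braessPathCost] <;> linarith

theorem braessPathCost_three_lt {γ₂ : ℝ} (hγ₂ : 0 < γ₂) (q : Fin 4) (hq : q ≠ 3) :
    braessPathCost γ₂ γ₂ 3 < braessPathCost γ₂ γ₂ q := by
  fin_cases q <;> simp_all [braessPathCost] <;> linarith

/-- Generalized Braess construction with γ2 ∈ (0,1], γ1 = γ2/8.
At the flow f^perv = (1,0,0,1) (edge flows: f_{e1}=f_{e4}=1), the effective
path costs for sensitivity class i are: p1 ↦ 2(1+γᵢ), p2,p3 ↦ 2+γ1+γᵢ,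
p4 ↦ 2+γ2.  Population 1 weakly prefers p1, population 2 strictly prefers p4. -/
theorem stmt2
    (γ1 γ2 : ℝ) (hγ2 : 0 < γ2 ∧ γ2 ≤ 1) (hγ1 : γ1 = γ2 / 8)
    -- effective path costs for sensitivity class with parameter γ at f^perv=(1,0,0,1)
    (J : ℝ → Fin 4 → ℝ)
    (hJ : ∀ γ, J γ = ![ (1 + γ * 1) + (1 + γ * 1),
                        (1 + γ * 1) + (1 + γ2 / 8),
                        (1 + γ2 / 8) + (1 + γ * 1),
                        2 + γ2 ]) :
    -- population 1 weakly prefers the zig-zag path p1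
    (J γ1 0 = 2 * (1 + γ1)) ∧ (∀ q, J γ1 0 ≤ J γ1 q) ∧
    -- population 2 strictly prefers the isolated path p4
    (J γ2 3 = 2 + γ2) ∧ (J γ2 3 < 2 * (1 + γ2)) ∧ (J γ2 3 < 2 + γ1 + γ2) ∧
    (∀ q, q ≠ 3 → J γ2 3 < J γ2 q) := by
  have hJ' : ∀ γ, J γ = braessPathCost γ2 γ := hJ
  simp only [hJ']
  obtain ⟨hγ2pos, -⟩ := hγ2
  have hγ1pos : 0 < γ1 := by linarith
  have hp4 : braessPathCost γ2 γ2 3 = 2 + γ2 := rfl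
  refine ⟨?_, braessPathCost_zero_le hγ1pos.le hγ1.le, hp4, ?_, ?_, braessPathCost_three_lt hγ2pos⟩
  · simp only [braessPathCost, Matrix.cons_val_zero]
    ring
  · simpa [braessPathCost, ← two_mul] using braessPathCost_three_lt hγ2pos 0 (by decide)
  · linarith
end

section
/- For the generalized Braess construction with parameter γ2 ∈ (0,1], the untolled Nash flow f^nf = (γ2/4, 1−γ2/8, 1−γ2/8, 0) has total latency 4 + γ2/2, while the tolled Nash flow f^perv = (1,0,0,1) has total latency 4 + γ2; hence the tolls strictly increase the total latency. -/
/-- Generalized Braess construction, γ2 ∈ (0,1]: the untolled Nash flow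
f^nf = (γ2/4, 1−γ2/8, 1−γ2/8, 0) has total latency 4+γ2/2, while the tolled
Nash flow f^perv = (1,0,0,1) has total latency 4+γ2 > 4+γ2/2. -/
theorem stmt3
    (γ2 : ℝ) (hγ2 : 0 < γ2 ∧ γ2 ≤ 1)
    (L : (Fin 4 → ℝ) → Fin 4 → ℝ)
    (hL : ∀ g, L g = ![ (g 0 + g 1) + (g 0 + g 2),
                        (g 0 + g 1) + (1 + γ2 / 8),
                        (1 + γ2 / 8) + (g 0 + g 2),
                        2 + γ2 ])
    (fnf fperv : Fin 4 → ℝ)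
    (hnf : fnf = ![γ2 / 4, 1 - γ2 / 8, 1 - γ2 / 8, 0])
    (hperv : fperv = ![1, 0, 0, 1]) :
    (∑ p, fnf p * L fnf p = 4 + γ2 / 2) ∧
    (∑ p, fperv p * L fperv p = 4 + γ2) ∧
    (∑ p, fnf p * L fnf p < ∑ p, fperv p * L fperv p) := by
  subst hnf hperv
  rw [hL, hL]
  simp [Fin.sum_univ_four]
  refine ⟨by ring, by ring, by nlinarith [hγ2.1, hγ2.2]⟩
end

section
/- For the generalized Braess construction with γ2 ∈ (0,1], the flow f^nf = (γ2/4, 1−γ2/8, 1−γ2/8, 0) is an untolled Nash flow: paths p1, p2, p3 all have equal latency 2+γ2/4, and path p4 has latency 2+γ2 ≥ 2+γ2/4. -/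
theorem nash_of_forall_pos_eq_of_forall_le {ι α β : Type*} [Zero α] [LT α] [Preorder β]
    {f : ι → α} {ℓ : ι → β} {c : β}
    (heq : ∀ p, 0 < f p → ℓ p = c) (hle : ∀ q, c ≤ ℓ q) :
    ∀ p, 0 < f p → ∀ q, ℓ p ≤ ℓ q :=
  fun p hp q => (heq p hp).le.trans (hle q)

/-- Generalized Braess construction, γ2 ∈ (0,1]: the flow
f^nf = (γ2/4, 1−γ2/8, 1−γ2/8, 0) is an untolled Nash flow: paths p1,p2,p3 all
have latency 2+γ2/4, path p4 has latency 2+γ2 ≥ 2+γ2/4. -/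
theorem stmt4
    (γ2 : ℝ) (hγ2 : 0 < γ2 ∧ γ2 ≤ 1)
    (L : (Fin 4 → ℝ) → Fin 4 → ℝ)
    (hL : ∀ g, L g = ![ (g 0 + g 1) + (g 0 + g 2),
                        (g 0 + g 1) + (1 + γ2 / 8),
                        (1 + γ2 / 8) + (g 0 + g 2),
                        2 + γ2 ])
    (fnf : Fin 4 → ℝ)
    (hnf : fnf = ![γ2 / 4, 1 - γ2 / 8, 1 - γ2 / 8, 0]) :
    (L fnf 0 = 2 + γ2 / 4) ∧ (L fnf 1 = 2 + γ2 / 4) ∧ (L fnf 2 = 2 + γ2 / 4) ∧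
    (L fnf 3 = 2 + γ2) ∧ (2 + γ2 / 4 ≤ 2 + γ2) ∧
    (∀ p, 0 < fnf p → ∀ q, L fnf p ≤ L fnf q) := by
  have hlat : L fnf = ![2 + γ2 / 4, 2 + γ2 / 4, 2 + γ2 / 4, 2 + γ2] := by
    rw [hL, hnf]
    ext i
    fin_cases i <;>
      simp only [Fin.zero_eta, Fin.mk_one, Fin.reduceFinMk, Matrix.cons_val_zero,
        Matrix.cons_val_one, Matrix.cons_val] <;>
      ring
  have hp4_slower : 2 + γ2 / 4 ≤ 2 + γ2 := by linarith [hγ2.1]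
  refine ⟨by rw [hlat]; rfl, by rw [hlat]; rfl, by rw [hlat]; rfl, by rw [hlat]; rfl, hp4_slower,
    nash_of_forall_pos_eq_of_forall_le (c := 2 + γ2 / 4) ?used ?slower⟩
  case used =>
    intro p hp
    fin_cases p
    · rw [hlat]; rfl
    · rw [hlat]; rfl
    · rw [hlat]; rfl
    · simp [hnf] at hp
  case slower =>
    intro q
    rw [hlat]
    fin_cases q
    exacts [le_rfl, le_rfl, le_rfl, hp4_slower]
end

section
/- Fix d ≥ 1 and α > 0, and let the flow rate be r = ((1/(α(d+1)))^{1/d}. If tolls τ1(f) = Kα f^d and τ2(f) = k1 (on the constant edge ℓ2 = 1) are such that for all s ∈ [S_L, S_U], α r^d + s K α r^d ≤ 1 + s k1 (i.e., no user prefers the constant edge), then writing K = k1 + k2 d, the inequality k2 ≤ k1 + 1/s holds for all s ∈ (0, S_U], hence k2 ≤ k1 + 1/S_U. -/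
open Real

/-- Pigou network: edge 1 has latency α f^d, edge 2 constant latency 1, with
flow rate r = (1/(α(d+1)))^{1/d}.  If tolls τ1(f)=Kαf^d, τ2 = k1 are such that
no user with sensitivity s ∈ [S_L,S_U] prefers the constant edge, then writing
K = k1 + k2·d we get k2 ≤ k1 + 1/s for all s ∈ (0,S_U], hence k2 ≤ k1 + 1/S_U. -/
theorem stmt7
    (d α SL SU K k1 k2 : ℝ)
    (hd : 1 ≤ d) (hα : 0 < α) (hSL : 0 ≤ SL) (hSU : SL ≤ SU) (hSUpos : 0 < SU)
    (r : ℝ) (hr : r = (1 / (α * (d + 1))) ^ (1 / d))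
    (hK : K = k1 + k2 * d)
    (hnoperv : ∀ s ∈ Set.Icc SL SU, α * r ^ d + s * K * (α * r ^ d) ≤ 1 + s * k1) :
    (∀ s ∈ Set.Ioc (0 : ℝ) SU, k2 ≤ k1 + 1 / s) ∧ k2 ≤ k1 + 1 / SU := by
  have hd0 : (0:ℝ) < d := lt_of_lt_of_le one_pos hd
  have hd1 : (0:ℝ) < d + 1 := by linarith
  have hx : (0:ℝ) ≤ 1 / (α * (d + 1)) := by positivity
  have hrd : α * r ^ d = 1 / (d + 1) := by
    rw [hr, ← Real.rpow_mul hx]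
    have hdd : 1 / d * d = 1 := by field_simp
    rw [hdd, Real.rpow_one]
    field_simp
  have key : k2 ≤ k1 + 1 / SU := by
    have h := hnoperv SU ⟨hSU, le_refl SU⟩
    rw [hrd, hK] at h
    have h' : 1 + SU * (k1 + k2 * d) ≤ (d + 1) * (1 + SU * k1) := by
      have := mul_le_mul_of_nonneg_left h (le_of_lt hd1)
      have hne : (d:ℝ) + 1 ≠ 0 := ne_of_gt hd1
      field_simp at this
      nlinarith
    have hks : k2 * SU ≤ 1 + SU * k1 := by nlinarith
    have h1 : k2 ≤ (1 + SU * k1) / SU := (le_div_iff₀ hSUpos).mpr hks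
    calc k2 ≤ (1 + SU * k1) / SU := h1
      _ = k1 + 1 / SU := by field_simp; ring
  refine ⟨fun s hs => ?_, key⟩
  have : 1 / SU ≤ 1 / s := one_div_le_one_div_of_le hs.1 hs.2
  linarith
end

section
/- Let d ≥ 1 be fixed and define P(β) = 1 / (1 + dβ − d((1+dβ)/(1+d))^{(d+1)/d}) for β ∈ [0,1]. Then P is well-defined (the denominator is positive) and strictly decreasing on [0,1], with P(1) = 1. -/
/-!
With `p = (d + 1) / d` and `x = (1 + dβ) / (1 + d) ∈ (0, 1]`, the denominator equals
`d (p x - x ^ p)`. The map `x ↦ p x - x ^ p` has derivative `p (1 - x ^ (p - 1)) > 0` on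
`(0, 1)` and vanishes at `0`, so the denominator is positive and strictly increasing in `β`.
-/

open Real Set

theorem strictMonoOn_mul_sub_rpow {p : ℝ} (hp : 1 < p) :
    StrictMonoOn (fun x : ℝ => p * x - x ^ p) (Icc 0 1) := by
  have hcont : ContinuousOn (fun x : ℝ => p * x - x ^ p) (Icc 0 1) :=
    (continuousOn_const.mul continuousOn_id).sub
      (continuousOn_id.rpow_const fun _ _ => Or.inr (by linarith))
  refine strictMonoOn_of_deriv_pos (convex_Icc 0 1) hcont fun x hx => ?_
  rw [interior_Icc] at hx
  have hderiv : HasDerivAt (fun x : ℝ => p * x - x ^ p) (p * 1 - p * x ^ (p - 1)) x :=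
    ((hasDerivAt_id x).const_mul p).sub (hasDerivAt_rpow_const (Or.inl hx.1.ne'))
  have hpow : x ^ (p - 1) < 1 := rpow_lt_one hx.1.le hx.2 (by linarith)
  rw [hderiv.deriv]
  nlinarith

theorem mul_sub_rpow_pos {p x : ℝ} (hp : 1 < p) (hx : x ∈ Ioc 0 1) : 0 < p * x - x ^ p := by
  have h := strictMonoOn_mul_sub_rpow hp (left_mem_Icc.2 zero_le_one) (Ioc_subset_Icc_self hx) hx.1
  simpa [zero_rpow (by linarith : p ≠ 0)] using h

noncomputable def poaDenom (d β : ℝ) : ℝ :=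
  1 + d * β - d * ((1 + d * β) / (1 + d)) ^ ((d + 1) / d)

namespace poaDenom

variable {d : ℝ}

theorem eq_mul_mul_sub_rpow (hd : 0 < d) (β : ℝ) :
    poaDenom d β = d * ((d + 1) / d * ((1 + d * β) / (1 + d))
      - ((1 + d * β) / (1 + d)) ^ ((d + 1) / d)) := by
  unfold poaDenom
  field_simp
  ring

theorem one_lt_exponent (hd : 0 < d) : 1 < (d + 1) / d := by
  rw [lt_div_iff₀ hd]; linarith

theorem base_mem_Ioc (hd : 0 < d) {β : ℝ} (hβ : β ∈ Icc 0 1) :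
    (1 + d * β) / (1 + d) ∈ Ioc 0 1 := by
  obtain ⟨hβ0, hβ1⟩ := hβ
  refine ⟨by positivity, ?_⟩
  rw [div_le_one (by linarith)]
  nlinarith

theorem pos (hd : 0 < d) {β : ℝ} (hβ : β ∈ Icc 0 1) : 0 < poaDenom d β := by
  rw [eq_mul_mul_sub_rpow hd]
  exact mul_pos hd (mul_sub_rpow_pos (one_lt_exponent hd) (base_mem_Ioc hd hβ))

theorem strictMonoOn (hd : 0 < d) : StrictMonoOn (poaDenom d) (Icc 0 1) := by
  intro a ha b hb hab
  rw [eq_mul_mul_sub_rpow hd, eq_mul_mul_sub_rpow hd]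
  have hbase : (1 + d * a) / (1 + d) < (1 + d * b) / (1 + d) := by
    gcongr
  exact mul_lt_mul_of_pos_left (strictMonoOn_mul_sub_rpow (one_lt_exponent hd)
    (Ioc_subset_Icc_self (base_mem_Ioc hd ha)) (Ioc_subset_Icc_self (base_mem_Ioc hd hb))
    hbase) hd

theorem one (hd : 0 < d) : poaDenom d 1 = 1 := by
  simp [poaDenom, div_self (by linarith : 1 + d ≠ 0)]

end poaDenom

/-- The PoA expression P(β) = 1/(1+dβ−d((1+dβ)/(1+d))^{(d+1)/d}) is
well-defined (positive denominator) and strictly decreasing on [0,1], with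
P(1) = 1. -/
theorem stmt10
    (d : ℕ) (hd : 1 ≤ d)
    (P : ℝ → ℝ)
    (hP : ∀ β : ℝ, P β = 1 / (1 + d * β -
        d * (((1 + d * β) / (1 + d)) ^ (((d : ℝ) + 1) / d)))) :
    (∀ β ∈ Set.Icc (0 : ℝ) 1,
        0 < 1 + d * β - d * (((1 + d * β) / (1 + d)) ^ (((d : ℝ) + 1) / d))) ∧
    StrictAntiOn P (Set.Icc (0 : ℝ) 1) ∧
    P 1 = 1 := by
  have hd : (0 : ℝ) < d := by exact_mod_cast hd
  have hP : ∀ β, P β = 1 / poaDenom d β := hP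
  refine ⟨fun β hβ => poaDenom.pos hd hβ, fun a ha b hb hab => ?_, ?_⟩
  · rw [hP, hP]
    exact one_div_lt_one_div_of_lt (poaDenom.pos hd ha) (poaDenom.strictMonoOn hd ha hb hab)
  · rw [hP, poaDenom.one hd, div_one]
end

section
/- In a two-link Nash flow under tolls of the form τ_e(f) = k1 ℓ_e(f) + k2 f ℓ_e'(f) with heterogeneous sensitivities, if user x with sensitivity s_x uses link i (f_i > 0) and user y with sensitivity s_y uses link j (f_j > 0), and s_x ≤ s_y, then: (1) 0 ≤ (s_y − s_x)(ℓ*_i(f_i) − ℓ*_j(f_j)) where ℓ*_e(f) = f ℓ_e'(f); (2) consequently if s_x < s_y then ℓ*_i(f_i) ≥ ℓ*_j(f_j) and ℓ_i(f_i) ≤ ℓ_j(f_j). -/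
/-- Two-link Nash ordering under sensitivity-weighted marginal-cost tolls.
Li, Lj are the latencies ℓ_i(f_i), ℓ_j(f_j); Lsi, Lsj the marginal terms
ℓ*_i(f_i)=f_i ℓ_i'(f_i), ℓ*_j(f_j).  User x (sensitivity s_x) on link i and
user y (sensitivity s_y) on link j satisfy their Nash conditions. -/
theorem stmt12
    (Li Lj Lsi Lsj sx sy : ℝ)
    (hLsi : 0 ≤ Lsi) (hLsj : 0 ≤ Lsj)
    (hsx : sx ∈ Set.Icc (0 : ℝ) 1) (hsy : sy ∈ Set.Icc (0 : ℝ) 1)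
    (hxy : sx ≤ sy)
    (hNashx : Li + sx * Lsi ≤ Lj + sx * Lsj)
    (hNashy : Lj + sy * Lsj ≤ Li + sy * Lsi) :
    0 ≤ (sy - sx) * (Lsi - Lsj) ∧
    (sx < sy → Lsj ≤ Lsi ∧ Li ≤ Lj) := by
  constructor
  · nlinarith
  · intro h
    constructor
    · nlinarith
    · nlinarith [mul_le_mul_of_nonneg_left (show Lsj ≤ Lsi by nlinarith) hsx.1]
end
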